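/- arXiv:1412.3634 — 6 statements merged into one kernel-verified Lean document; each statement's English description precedes it below -/
import Mathlib

section
/- Let H be a finite-dimensional Hilbert space, and let W ⊆ B(H), W̃ ⊆ B(H)* be subspaces containing order units (a strictly positive operator in W and a strictly positive-definite functional in W̃) such that K = W ∩ W̃^⊥ satisfies K ∩ S⁺ = {0}; let L : W → V = W/K be the quotient map and L̃ : W^⊥ + W̃ → (W^⊥ + W̃)/W^⊥ ≅ V* the dual quotient map. For a linear map D : V → V, there exists a completely positive map F : B(H) → B(H) satisfying (1) (F ⊗ id_n)(W_n) ⊆ W_n for all n, (2) (F* ⊗ id_n)(W̃_n) ⊆ W̃_n for all n, and (3) L ∘ F|_W = D ∘ L, if and only if D ∈ (L ⊗ L̃)(S^CP). -/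
/-!
Invariance of the level spaces `W_k = W ⊗ B(ℂᵏ)` under `F ⊗ id_k` is already forced at level one:
`F ⊗ id_k` maps a generator `w ⊗ B` to `F w ⊗ B`, and conversely a block of `F w ⊗ 1` recovers
`F w`; dually for `W̃_k` and `F*`. The intertwining relation `L ∘ F|_W = D ∘ L` is then
equivalent to its pairings with all of `V*`, which are exactly the values `σ (F x)` because `L̃`
is onto `V*` and `⟨L̃ σ, L x⟩ = σ x`.
-/

open Matrix
open scoped ComplexOrder

/-- `Mat n` is `B(H)` for `H = ℂⁿ`: the `n × n` complex matrices. -/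
abbrev Mat (n : ℕ) := Matrix (Fin n) (Fin n) ℂ

/-- The ampliation `Φ ⊗ id_k` of a linear map `Φ` on `B(ℂⁿ)`, acting block-wise on
`B(ℂⁿ ⊗ ℂᵏ)`. -/
noncomputable def amplL {n : ℕ} (Φ : Mat n →ₗ[ℂ] Mat n) (k : ℕ) :
    Matrix (Fin n × Fin k) (Fin n × Fin k) ℂ →ₗ[ℂ]
      Matrix (Fin n × Fin k) (Fin n × Fin k) ℂ where
  toFun X := Matrix.of fun p q =>
    Φ (Matrix.of fun i j => X (i, p.2) (j, q.2)) p.1 q.1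
  map_add' X Y := by
    ext p q
    have h : (Matrix.of fun i j => X (i, p.2) (j, q.2) + Y (i, p.2) (j, q.2))
        = (Matrix.of fun i j => X (i, p.2) (j, q.2))
          + (Matrix.of fun i j => Y (i, p.2) (j, q.2)) := by
      ext i j
      simp
    simp only [Matrix.of_apply, Matrix.add_apply]
    rw [h, map_add, Matrix.add_apply]
  map_smul' c X := by
    ext p q
    have h : (Matrix.of fun i j => c • X (i, p.2) (j, q.2))
        = c • (Matrix.of fun i j => X (i, p.2) (j, q.2)) := by
      ext i j
      simp
    simp only [Matrix.of_apply, Matrix.smul_apply, RingHom.id_apply]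
    rw [h, _root_.map_smul, Matrix.smul_apply]

/-- A linear map on `B(ℂⁿ)` is completely positive if all its ampliations
`Φ ⊗ id_k` preserve positive semidefiniteness. -/
def IsCP {n : ℕ} (Φ : Mat n →ₗ[ℂ] Mat n) : Prop :=
  ∀ (k : ℕ) (X : Matrix (Fin n × Fin k) (Fin n × Fin k) ℂ),
    X.PosSemidef → (amplL Φ k X).PosSemidef

/-- The cone `C = L(W⁺)`: the image under the quotient map `L` of the positive
semidefinite elements of `W`. -/
def coneC {n : ℕ} {V : Type} [AddCommGroup V] [Module ℂ V]
    (W : Submodule ℂ (Mat n)) (L : ↥W →ₗ[ℂ] V) : Set V :=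
  {v | ∃ x : ↥W, ((x : Mat n)).PosSemidef ∧ v = L x}

/-- The dual cone `C* = {f ∈ V* : f(x) ≥ 0 for all x ∈ C}`. -/
def dualCone {V : Type} [AddCommGroup V] [Module ℂ V] (C : Set V) :
    Set (Module.Dual ℂ V) :=
  {f | ∀ x ∈ C, 0 ≤ f x}

/-- The SDR mapping cone `P = (L ⊗ L̃)(S^CP)`: the linear maps on `V` obtained, via
the quotient maps `L` and `L̃`, from completely positive maps `F` on `B(H)` with
`F(W) ⊆ W` and `F*(W̃) ⊆ W̃`. -/
def mappingCone {n : ℕ} {V : Type} [AddCommGroup V] [Module ℂ V]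
    (W : Submodule ℂ (Mat n)) (Wt : Submodule ℂ (Module.Dual ℂ (Mat n)))
    (L : ↥W →ₗ[ℂ] V)
    (Lt : ↥(W.dualAnnihilator ⊔ Wt) →ₗ[ℂ] Module.Dual ℂ V) : Set (V →ₗ[ℂ] V) :=
  {Dm | ∃ F : Mat n →ₗ[ℂ] Mat n, IsCP F ∧ (∀ X ∈ W, F X ∈ W) ∧
    (∀ σ ∈ Wt, σ ∘ₗ F ∈ Wt) ∧
    ∀ (σ : ↥(W.dualAnnihilator ⊔ Wt)) (x : ↥W),
      Lt σ (Dm (L x)) = (σ : Module.Dual ℂ (Mat n)) (F (x : Mat n))}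

open Kronecker

/-- The level-`k` space `W_k = W ⊗ B(ℂᵏ) ⊆ B(H ⊗ ℂᵏ)` of a subspace `W ⊆ B(H)`:
the span of the Kronecker products `w ⊗ B` with `w ∈ W`. -/
noncomputable def levelSpace {n : ℕ} (W : Submodule ℂ (Mat n)) (k : ℕ) :
    Submodule ℂ (Matrix (Fin n × Fin k) (Fin n × Fin k) ℂ) :=
  Submodule.span ℂ {X | ∃ w ∈ W, ∃ B : Matrix (Fin k) (Fin k) ℂ, X = w ⊗ₖ B}

/-- The simple tensor `σ ⊗ τ` of functionals, as a functional on `B(H ⊗ ℂᵏ)`: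
apply `σ` blockwise and then `τ`. -/
noncomputable def funTensor {n k : ℕ} (σ : Module.Dual ℂ (Mat n))
    (τ : Module.Dual ℂ (Matrix (Fin k) (Fin k) ℂ)) :
    Module.Dual ℂ (Matrix (Fin n × Fin k) (Fin n × Fin k) ℂ) where
  toFun X := τ (Matrix.of fun a b => σ (Matrix.of fun i j => X (i, a) (j, b)))
  map_add' X Y := by
    have h : (Matrix.of fun a b => σ (Matrix.of fun i j => (X + Y) (i, a) (j, b)))
        = (Matrix.of fun a b => σ (Matrix.of fun i j => X (i, a) (j, b)))
          + (Matrix.of fun a b => σ (Matrix.of fun i j => Y (i, a) (j, b))) := by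
      ext a b
      have h2 : (Matrix.of fun i j => X (i, a) (j, b) + Y (i, a) (j, b))
          = (Matrix.of fun i j => X (i, a) (j, b))
            + (Matrix.of fun i j => Y (i, a) (j, b)) := by
        ext i j; simp
      simp only [Matrix.of_apply, Matrix.add_apply]
      rw [h2, map_add]
    show τ _ = τ _ + τ _
    rw [h, map_add]
  map_smul' c X := by
    have h : (Matrix.of fun a b => σ (Matrix.of fun i j => (c • X) (i, a) (j, b)))
        = c • (Matrix.of fun a b => σ (Matrix.of fun i j => X (i, a) (j, b))) := by
      ext a b
      have h2 : (Matrix.of fun i j => c • X (i, a) (j, b))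
          = c • (Matrix.of fun i j => X (i, a) (j, b)) := by
        ext i j; simp
      simp only [Matrix.of_apply, Matrix.smul_apply]
      rw [h2, _root_.map_smul]
    show τ _ = c • τ _
    rw [h, _root_.map_smul]

/-- The level-`k` space `W̃_k = W̃ ⊗ B(ℂᵏ)* ⊆ B(H ⊗ ℂᵏ)*` of a subspace
`W̃ ⊆ B(H)*`. -/
noncomputable def dualLevelSpace {n : ℕ} (Wt : Submodule ℂ (Module.Dual ℂ (Mat n)))
    (k : ℕ) : Submodule ℂ (Module.Dual ℂ (Matrix (Fin n × Fin k) (Fin n × Fin k) ℂ)) :=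
  Submodule.span ℂ {Sg | ∃ σ ∈ Wt, ∃ τ : Module.Dual ℂ (Matrix (Fin k) (Fin k) ℂ),
    Sg = funTensor σ τ}

namespace Matrix

variable {R l m n o : Type*} [CommSemiring R]

def submatrixLinearMap (r : l → m) (c : o → n) : Matrix m n R →ₗ[R] Matrix l o R where
  toFun A := A.submatrix r c
  map_add' _ _ := rfl
  map_smul' _ _ := rfl

@[simp]
lemma submatrixLinearMap_apply (r : l → m) (c : o → n) (A : Matrix m n R) :
    submatrixLinearMap r c A = A.submatrix r c := rfl

lemma kronecker_submatrix_prodMk_right (A : Matrix l m R) (B : Matrix n o R)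
    (a : n) (b : o) : (A ⊗ₖ B).submatrix (·, a) (·, b) = B a b • A := by
  ext i j
  simp [mul_comm]

end Matrix

section Ampliation

variable {n k : ℕ}

lemma amplL_kronecker (Φ : Mat n →ₗ[ℂ] Mat n) (w : Mat n) (B : Matrix (Fin k) (Fin k) ℂ) :
    amplL Φ k (w ⊗ₖ B) = Φ w ⊗ₖ B := by
  ext ⟨i, a⟩ ⟨j, b⟩
  change Φ ((w ⊗ₖ B).submatrix (·, a) (·, b)) i j = _
  rw [Matrix.kronecker_submatrix_prodMk_right, _root_.map_smul, Matrix.kronecker_apply,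
    Matrix.smul_apply, smul_eq_mul, mul_comm]

lemma funTensor_comp_amplL (Φ : Mat n →ₗ[ℂ] Mat n) (σ : Module.Dual ℂ (Mat n))
    (τ : Module.Dual ℂ (Matrix (Fin k) (Fin k) ℂ)) :
    funTensor σ τ ∘ₗ amplL Φ k = funTensor (σ ∘ₗ Φ) τ := rfl

lemma funTensor_kronecker (σ : Module.Dual ℂ (Mat n))
    (τ : Module.Dual ℂ (Matrix (Fin k) (Fin k) ℂ)) (w : Mat n) (B : Matrix (Fin k) (Fin k) ℂ) :
    funTensor σ τ (w ⊗ₖ B) = τ B * σ w := by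
  change τ (Matrix.of fun a b => σ ((w ⊗ₖ B).submatrix (·, a) (·, b))) = _
  have hblocks : (Matrix.of fun a b => σ ((w ⊗ₖ B).submatrix (·, a) (·, b))) = σ w • B := by
    ext a b
    rw [Matrix.of_apply, Matrix.kronecker_submatrix_prodMk_right, _root_.map_smul,
      Matrix.smul_apply, smul_eq_mul, smul_eq_mul, mul_comm]
  rw [hblocks, _root_.map_smul, smul_eq_mul, mul_comm]

end Ampliation

section LevelSpaces

variable {n : ℕ}

lemma mem_of_kronecker_mem_levelSpace {W : Submodule ℂ (Mat n)} {k : ℕ} {w : Mat n}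
    {B : Matrix (Fin k) (Fin k) ℂ} {a b : Fin k} (hB : B a b ≠ 0)
    (h : w ⊗ₖ B ∈ levelSpace W k) : w ∈ W := by
  have hle : levelSpace W k ≤ W.comap (Matrix.submatrixLinearMap (·, a) (·, b)) := by
    rw [levelSpace, Submodule.span_le]
    rintro _ ⟨w', hw', B', rfl⟩
    simpa only [SetLike.mem_coe, Submodule.mem_comap, Matrix.submatrixLinearMap_apply,
      Matrix.kronecker_submatrix_prodMk_right] using W.smul_mem (B' a b) hw'
  have hblock := hle h
  rwa [Submodule.mem_comap, Matrix.submatrixLinearMap_apply,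
    Matrix.kronecker_submatrix_prodMk_right, Submodule.smul_mem_iff _ hB] at hblock

lemma mem_of_funTensor_mem_dualLevelSpace {Wt : Submodule ℂ (Module.Dual ℂ (Mat n))} {k : ℕ}
    {σ : Module.Dual ℂ (Mat n)} {τ : Module.Dual ℂ (Matrix (Fin k) (Fin k) ℂ)}
    {B : Matrix (Fin k) (Fin k) ℂ} (hτ : τ B ≠ 0)
    (h : funTensor σ τ ∈ dualLevelSpace Wt k) : σ ∈ Wt := by
  have hrestrict : ∀ (σ' : Module.Dual ℂ (Mat n)) (τ' : Module.Dual ℂ (Matrix (Fin k) (Fin k) ℂ)),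
      LinearMap.lcomp ℂ ℂ ((Matrix.kroneckerBilinear (R := ℂ) (α := ℂ)).flip B) (funTensor σ' τ') = τ' B • σ' := by
    intro σ' τ'
    ext w
    exact funTensor_kronecker σ' τ' w B
  have hle : dualLevelSpace Wt k
      ≤ Wt.comap (LinearMap.lcomp ℂ ℂ ((Matrix.kroneckerBilinear (R := ℂ) (α := ℂ)).flip B)) := by
    rw [dualLevelSpace, Submodule.span_le]
    rintro _ ⟨σ', hσ', τ', rfl⟩
    rw [SetLike.mem_coe, Submodule.mem_comap, hrestrict]
    exact Wt.smul_mem _ hσ'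
  have hσ := hle h
  rwa [Submodule.mem_comap, hrestrict, Submodule.smul_mem_iff _ hτ] at hσ

lemma forall_amplL_mem_levelSpace_iff (W : Submodule ℂ (Mat n)) (F : Mat n →ₗ[ℂ] Mat n) :
    (∀ k, ∀ X ∈ levelSpace W k, amplL F k X ∈ levelSpace W k) ↔ ∀ X ∈ W, F X ∈ W := by
  constructor
  · intro h X hX
    refine mem_of_kronecker_mem_levelSpace (B := (1 : Matrix (Fin 1) (Fin 1) ℂ)) (a := 0) (b := 0)
      one_ne_zero ?_
    rw [← amplL_kronecker]
    exact h 1 _ (Submodule.subset_span ⟨X, hX, 1, rfl⟩)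
  · intro h k X hX
    refine (Submodule.map_span_le _ _ _).2 ?_ (Submodule.mem_map_of_mem hX)
    rintro _ ⟨w, hw, B, rfl⟩
    rw [amplL_kronecker]
    exact Submodule.subset_span ⟨F w, h w hw, B, rfl⟩

lemma forall_comp_amplL_mem_dualLevelSpace_iff (Wt : Submodule ℂ (Module.Dual ℂ (Mat n)))
    (F : Mat n →ₗ[ℂ] Mat n) :
    (∀ k, ∀ Sg ∈ dualLevelSpace Wt k, Sg ∘ₗ amplL F k ∈ dualLevelSpace Wt k) ↔
      ∀ σ ∈ Wt, σ ∘ₗ F ∈ Wt := by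
  constructor
  · intro h σ hσ
    refine mem_of_funTensor_mem_dualLevelSpace (τ := Matrix.traceLinearMap (Fin 1) ℂ ℂ)
      (B := 1) (by simp) ?_
    rw [← funTensor_comp_amplL]
    exact h 1 _ (Submodule.subset_span ⟨σ, hσ, _, rfl⟩)
  · intro h k Sg hSg
    refine (Submodule.map_span_le (LinearMap.lcomp ℂ ℂ (amplL F k)) _ _).2 ?_
      (Submodule.mem_map_of_mem hSg)
    rintro _ ⟨σ, hσ, τ, rfl⟩
    exact Submodule.subset_span ⟨σ ∘ₗ F, h σ hσ, τ, rfl⟩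

end LevelSpaces

lemma intertwines_iff_forall_pairing_eq {K M V : Type*} [Field K] [AddCommGroup M] [Module K M]
    [AddCommGroup V] [Module K V] {W : Submodule K M} {S : Submodule K (Module.Dual K M)}
    {L : W →ₗ[K] V} {Lt : S →ₗ[K] Module.Dual K V} (hLt : Function.Surjective Lt)
    (hpair : ∀ (σ : S) (x : W), Lt σ (L x) = (σ : Module.Dual K M) x)
    {F : M →ₗ[K] M} (hFW : ∀ X ∈ W, F X ∈ W) (D : V →ₗ[K] V) :
    (∀ x y : W, (y : M) = F x → L y = D (L x)) ↔
      ∀ (σ : S) (x : W), Lt σ (D (L x)) = (σ : Module.Dual K M) (F x) := by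
  constructor
  · intro h σ x
    rw [← h x ⟨F x, hFW x x.2⟩ rfl, hpair]
  · intro h x y hy
    rw [← sub_eq_zero, ← Module.forall_dual_apply_eq_zero_iff K]
    intro φ
    obtain ⟨σ, rfl⟩ := hLt φ
    rw [map_sub, hpair, h, hy, sub_self]

theorem lifting_iff_mem_mapping_cone_general
    {n : ℕ} (W : Submodule ℂ (Mat n)) (Wt : Submodule ℂ (Module.Dual ℂ (Mat n)))
    {V : Type} [AddCommGroup V] [Module ℂ V]
    -- L : W → V = W/K is the quotient map
    (L : ↥W →ₗ[ℂ] V)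
    -- L̃ : W^⊥ + W̃ → (W^⊥ + W̃)/W^⊥ ≅ V* is the dual quotient map
    (Lt : ↥(W.dualAnnihilator ⊔ Wt) →ₗ[ℂ] Module.Dual ℂ V)
    (hLt : Function.Surjective Lt)
    (hpair : ∀ (σ : ↥(W.dualAnnihilator ⊔ Wt)) (x : ↥W),
      Lt σ (L x) = (σ : Module.Dual ℂ (Mat n)) (x : Mat n))
    (Dm : V →ₗ[ℂ] V) :
    (∃ F : Mat n →ₗ[ℂ] Mat n, IsCP F ∧
      -- (1) (F ⊗ id_k)(W_k) ⊆ W_k for all k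
      (∀ k : ℕ, ∀ X ∈ levelSpace W k, amplL F k X ∈ levelSpace W k) ∧
      -- (2) (F* ⊗ id_k)(W̃_k) ⊆ W̃_k for all k
      (∀ k : ℕ, ∀ Sg ∈ dualLevelSpace Wt k, Sg ∘ₗ amplL F k ∈ dualLevelSpace Wt k) ∧
      -- (3) L ∘ F|_W = D ∘ L
      (∀ x y : ↥W, (y : Mat n) = F (x : Mat n) → L y = Dm (L x))) ↔
    Dm ∈ mappingCone W Wt L Lt := by
  simp only [mappingCone, Set.mem_ofPred_eq, forall_amplL_mem_levelSpace_iff,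
    forall_comp_amplL_mem_dualLevelSpace_iff]
  exact exists_congr fun F => and_congr_right fun _ => and_congr_right fun hFW =>
    and_congr_right fun _ => intertwines_iff_forall_pairing_eq hLt hpair hFW Dm

/-- for a linear map `D : V → V` on the quotient operator system
`V = W/(W ∩ W̃^⊥)`, there exists a completely positive `F` on `B(H)` with
`(F ⊗ id_k)(W_k) ⊆ W_k` and `(F* ⊗ id_k)(W̃_k) ⊆ W̃_k` for all `k`, and
`L ∘ F|_W = D ∘ L`, if and only if `D ∈ (L ⊗ L̃)(S^CP)`. -/
theorem lifting_iff_mem_mapping_cone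
    {n : ℕ} (W : Submodule ℂ (Mat n)) (Wt : Submodule ℂ (Module.Dual ℂ (Mat n)))
    -- W and W̃ contain order units
    (horder : ∃ e ∈ W, e.PosDef)
    (horder' : ∃ t ∈ Wt, ∃ σ₀ : Mat n, σ₀.PosDef ∧ ∀ X : Mat n, t X = (σ₀ * X).trace)
    -- K = W ∩ W̃^⊥ contains no nonzero positive semidefinite element
    (hK : ∀ X : Mat n, X ∈ W → X ∈ Wt.dualCoannihilator → X.PosSemidef → X = 0)
    {V : Type} [AddCommGroup V] [Module ℂ V]
    -- L : W → V = W/K is the quotient map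
    (L : ↥W →ₗ[ℂ] V) (hL : Function.Surjective L)
    (hLker : ∀ x : ↥W, L x = 0 ↔ (x : Mat n) ∈ Wt.dualCoannihilator)
    -- L̃ : W^⊥ + W̃ → (W^⊥ + W̃)/W^⊥ ≅ V* is the dual quotient map
    (Lt : ↥(W.dualAnnihilator ⊔ Wt) →ₗ[ℂ] Module.Dual ℂ V)
    (hLt : Function.Surjective Lt)
    (hLtker : ∀ σ : ↥(W.dualAnnihilator ⊔ Wt),
      Lt σ = 0 ↔ (σ : Module.Dual ℂ (Mat n)) ∈ W.dualAnnihilator)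
    (hpair : ∀ (σ : ↥(W.dualAnnihilator ⊔ Wt)) (x : ↥W),
      Lt σ (L x) = (σ : Module.Dual ℂ (Mat n)) (x : Mat n))
    (Dm : V →ₗ[ℂ] V) :
    (∃ F : Mat n →ₗ[ℂ] Mat n, IsCP F ∧
      -- (1) (F ⊗ id_k)(W_k) ⊆ W_k for all k
      (∀ k : ℕ, ∀ X ∈ levelSpace W k, amplL F k X ∈ levelSpace W k) ∧
      -- (2) (F* ⊗ id_k)(W̃_k) ⊆ W̃_k for all k
      (∀ k : ℕ, ∀ Sg ∈ dualLevelSpace Wt k, Sg ∘ₗ amplL F k ∈ dualLevelSpace Wt k) ∧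
      -- (3) L ∘ F|_W = D ∘ L
      (∀ x y : ↥W, (y : Mat n) = F (x : Mat n) → L y = Dm (L x))) ↔
    Dm ∈ mappingCone W Wt L Lt :=
  lifting_iff_mem_mapping_cone_general W Wt L Lt hLt hpair Dm
end

section
/- Any two quasi-realizations R₁ = (V₁, π₁, D₁, τ₁) and R₂ = (V₂, π₂, D₂, τ₂) of the same process p, not necessarily of the same dimension, have isomorphic quotient realizations: there is a linear isomorphism T between the quotient spaces V̄₁ and V̄₂ such that π̄₁ = π̄₂ ∘ T, D̄₁(u) = T⁻¹ ∘ D̄₂(u) ∘ T for every u ∈ M, and τ̄₁ = T⁻¹(τ̄₂). -/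
/-
The observation map `x ↦ (w ↦ π(D(w) x))` of a quotient realization is injective: its kernel is
exactly the null space that was divided out. Its image is the image of the accessible subspace
under the observation map of the original realization, namely the span of the shifted processes
`v ↦ p(v w)`, which depends on `p` alone. So two quotient realizations of the same process embed
onto the same space of functions on `M*`, and the resulting isomorphism `T` intertwines everything
because the observation map does: `D(u)` becomes the shift by `u`, `π` the evaluation at the empty
word, and `τ` the process `p` itself.
-/

/-- A quasi-realization of a stochastic process on the free monoid over a finite
alphabet `M`. -/
structure QuasiRealization (M : Type) [Fintype M] (V : Type) [AddCommGroup V]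
    [Module ℝ V] where
  pi : V →ₗ[ℝ] ℝ
  tau : V
  D : FreeMonoid M →* Module.End ℝ V
  pi_stationary : pi ∘ₗ (∑ u : M, D (FreeMonoid.of u)) = pi
  tau_stationary : (∑ u : M, D (FreeMonoid.of u)) tau = tau

/-- The stochastic process generated by a quasi-realization: `p(w) = π (D(w) τ)`. -/
def QuasiRealization.proc {M : Type} [Fintype M] {V : Type} [AddCommGroup V]
    [Module ℝ V] (R : QuasiRealization M V) (w : FreeMonoid M) : ℝ :=
  R.pi (R.D w R.tau)

variable {M : Type} [Fintype M]

/-- The accessible subspace `W = span{D(w) τ : w ∈ M*}`. -/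
def accessibleSpace {U : Type} [AddCommGroup U] [Module ℝ U]
    (R : QuasiRealization M U) : Submodule ℝ U :=
  Submodule.span ℝ (Set.range fun w : FreeMonoid M => R.D w R.tau)

/-- The observable subspace `W̃ = span{π ∘ D(w) : w ∈ M*} ⊆ U*`. -/
def observableSpace {U : Type} [AddCommGroup U] [Module ℝ U]
    (R : QuasiRealization M U) : Submodule ℝ (Module.Dual ℝ U) :=
  Submodule.span ℝ (Set.range fun w : FreeMonoid M => R.pi ∘ₗ (R.D w : U →ₗ[ℝ] U))

/-- The null subspace `W̃^⊥ = {v : σ(v) = 0 for all σ ∈ W̃}`. -/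
def nullSpace {U : Type} [AddCommGroup U] [Module ℝ U]
    (R : QuasiRealization M U) : Submodule ℝ U :=
  (observableSpace R).dualCoannihilator

/-- `Rb` is (isomorphic to) the quotient realization of `R`: there is a canonical
projection `L` from the accessible subspace `W` of `R` onto the space of `Rb`, whose
kernel is `K = W ∩ W̃^⊥`, intertwining the `D`-maps, and transporting `τ` and `π`. -/
def IsQuotientRealization {U : Type} [AddCommGroup U] [Module ℝ U]
    {V : Type} [AddCommGroup V] [Module ℝ V]
    (R : QuasiRealization M U) (Rb : QuasiRealization M V) : Prop :=
  ∃ L : ↥(accessibleSpace R) →ₗ[ℝ] V,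
    Function.Surjective L ∧
    (∀ x : ↥(accessibleSpace R), L x = 0 ↔ (x : U) ∈ nullSpace R) ∧
    (∀ (w : FreeMonoid M) (x y : ↥(accessibleSpace R)),
      (y : U) = R.D w (x : U) → L y = Rb.D w (L x)) ∧
    (∀ t : ↥(accessibleSpace R), (t : U) = R.tau → Rb.tau = L t) ∧
    (∀ x : ↥(accessibleSpace R), Rb.pi (L x) = R.pi (x : U))

theorem LinearEquiv.exists_apply_eq_of_range_eq {R V₁ V₂ F : Type*} [Semiring R]
    [AddCommMonoid V₁] [Module R V₁] [AddCommMonoid V₂] [Module R V₂]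
    [AddCommMonoid F] [Module R F] {f₁ : V₁ →ₗ[R] F} {f₂ : V₂ →ₗ[R] F}
    (hf₁ : Function.Injective f₁) (hf₂ : Function.Injective f₂)
    (hrange : LinearMap.range f₁ = LinearMap.range f₂) :
    ∃ T : V₁ ≃ₗ[R] V₂, ∀ x, f₂ (T x) = f₁ x :=
  ⟨(LinearEquiv.ofInjective f₁ hf₁).trans
      ((LinearEquiv.ofEq _ _ hrange).trans (LinearEquiv.ofInjective f₂ hf₂).symm),
    fun x => by simp⟩

namespace QuasiRealization

variable {U V : Type} [AddCommGroup U] [Module ℝ U] [AddCommGroup V] [Module ℝ V]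

def observe (R : QuasiRealization M U) : U →ₗ[ℝ] FreeMonoid M → ℝ :=
  LinearMap.pi fun w => R.pi ∘ₗ R.D w

@[simp]
theorem observe_apply (R : QuasiRealization M U) (x : U) (w : FreeMonoid M) :
    R.observe x w = R.pi (R.D w x) := rfl

theorem observe_one (R : QuasiRealization M U) (x : U) : R.observe x 1 = R.pi x := by
  simp

theorem observe_D (R : QuasiRealization M U) (u v : FreeMonoid M) (x : U) :
    R.observe (R.D u x) v = R.observe x (v * u) := by
  simp

theorem observe_tau (R : QuasiRealization M U) : R.observe R.tau = R.proc := rfl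

theorem D_mem_accessibleSpace (R : QuasiRealization M U) (w : FreeMonoid M) {x : U}
    (hx : x ∈ accessibleSpace R) : R.D w x ∈ accessibleSpace R := by
  induction hx using Submodule.span_induction with
  | mem y hy =>
    obtain ⟨v, rfl⟩ := hy
    exact Submodule.subset_span ⟨w * v, by simp⟩
  | zero => simp
  | add a b _ _ ha hb => simpa using Submodule.add_mem _ ha hb
  | smul c a _ ha => simpa using Submodule.smul_mem _ c ha

theorem tau_mem_accessibleSpace (R : QuasiRealization M U) : R.tau ∈ accessibleSpace R :=
  Submodule.subset_span ⟨1, by simp⟩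

theorem nullSpace_eq_ker_observe (R : QuasiRealization M U) :
    nullSpace R = LinearMap.ker R.observe := by
  ext x
  rw [nullSpace, observableSpace, ← SetLike.mem_coe, Submodule.coe_dualCoannihilator_span,
    LinearMap.mem_ker]
  simp [funext_iff]

theorem map_observe_accessibleSpace (R : QuasiRealization M U) :
    (accessibleSpace R).map R.observe =
      Submodule.span ℝ (Set.range fun w v => R.proc (v * w)) := by
  rw [accessibleSpace, Submodule.map_span, ← Set.range_comp]
  congr
  funext w v
  simp [proc]

theorem observe_eq_of_intertwines {R : QuasiRealization M U} {Rb : QuasiRealization M V}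
    {W : Submodule ℝ U} (hW : ∀ w, ∀ x ∈ W, R.D w x ∈ W) {L : W →ₗ[ℝ] V}
    (hD : ∀ (w : FreeMonoid M) (x y : W), (y : U) = R.D w x → L y = Rb.D w (L x))
    (hpi : ∀ x : W, Rb.pi (L x) = R.pi x) (x : W) :
    Rb.observe (L x) = R.observe x := by
  funext w
  rw [observe_apply, observe_apply, ← hD w x ⟨_, hW w x x.2⟩ rfl, hpi]

end QuasiRealization

namespace IsQuotientRealization

open QuasiRealization

variable {U V : Type} [AddCommGroup U] [Module ℝ U] [AddCommGroup V] [Module ℝ V]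
  {R : QuasiRealization M U} {Rb : QuasiRealization M V}

theorem injective_observe (h : IsQuotientRealization R Rb) :
    Function.Injective Rb.observe := by
  obtain ⟨L, hsurj, hker, hD, -, hpi⟩ := h
  rw [← LinearMap.ker_eq_bot, eq_bot_iff]
  intro x hx
  obtain ⟨t, rfl⟩ := hsurj x
  have ht : (t : U) ∈ nullSpace R := by
    rw [nullSpace_eq_ker_observe, LinearMap.mem_ker,
      ← observe_eq_of_intertwines R.D_mem_accessibleSpace hD hpi]
    exact hx
  exact (hker t).mpr ht

theorem range_observe (h : IsQuotientRealization R Rb) :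
    LinearMap.range Rb.observe = (accessibleSpace R).map R.observe := by
  obtain ⟨L, hsurj, -, hD, -, hpi⟩ := h
  have hcomp : Rb.observe ∘ₗ L = R.observe ∘ₗ (accessibleSpace R).subtype :=
    LinearMap.ext (observe_eq_of_intertwines R.D_mem_accessibleSpace hD hpi)
  rw [← LinearMap.range_comp_of_range_eq_top _ (LinearMap.range_eq_top.mpr hsurj), hcomp,
    LinearMap.range_comp, Submodule.range_subtype]

theorem observe_tau (h : IsQuotientRealization R Rb) : Rb.observe Rb.tau = R.proc := by
  obtain ⟨L, -, -, hD, htau, hpi⟩ := h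
  rw [htau ⟨R.tau, R.tau_mem_accessibleSpace⟩ rfl,
    observe_eq_of_intertwines R.D_mem_accessibleSpace hD hpi, QuasiRealization.observe_tau]

end IsQuotientRealization

theorem quotient_realizations_isomorphic_general
    {U₁ U₂ V₁ V₂ : Type}
    [AddCommGroup U₁] [Module ℝ U₁]
    [AddCommGroup U₂] [Module ℝ U₂]
    [AddCommGroup V₁] [Module ℝ V₁]
    [AddCommGroup V₂] [Module ℝ V₂]
    (R₁ : QuasiRealization M U₁) (R₂ : QuasiRealization M U₂)
    (hequiv : ∀ w : FreeMonoid M, R₁.proc w = R₂.proc w)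
    (Rb₁ : QuasiRealization M V₁) (Rb₂ : QuasiRealization M V₂)
    (h₁ : IsQuotientRealization R₁ Rb₁) (h₂ : IsQuotientRealization R₂ Rb₂) :
    ∃ T : V₁ ≃ₗ[ℝ] V₂,
      (∀ x : V₁, Rb₁.pi x = Rb₂.pi (T x)) ∧
      (∀ (u : M) (x : V₁),
        Rb₁.D (FreeMonoid.of u) x = T.symm (Rb₂.D (FreeMonoid.of u) (T x))) ∧
      Rb₁.tau = T.symm Rb₂.tau := by
  have hproc : R₁.proc = R₂.proc := funext hequiv
  have hrange : LinearMap.range Rb₁.observe = LinearMap.range Rb₂.observe := by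
    rw [h₁.range_observe, h₂.range_observe, R₁.map_observe_accessibleSpace,
      R₂.map_observe_accessibleSpace, hproc]
  obtain ⟨T, hT⟩ := LinearEquiv.exists_apply_eq_of_range_eq h₁.injective_observe
    h₂.injective_observe hrange
  refine ⟨T, fun x => ?_, fun u x => ?_, ?_⟩
  · rw [← Rb₁.observe_one, ← Rb₂.observe_one, hT]
  · rw [LinearEquiv.eq_symm_apply]
    apply h₂.injective_observe
    funext v
    rw [hT, Rb₂.observe_D, Rb₁.observe_D, hT]
  · rw [LinearEquiv.eq_symm_apply]
    apply h₂.injective_observe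
    rw [hT, h₁.observe_tau, h₂.observe_tau, hproc]

/-- two quasi-realizations of the same process have isomorphic quotient
realizations: there is a linear isomorphism `T` with `π̄₁ = π̄₂ ∘ T`,
`D̄₁(u) = T⁻¹ ∘ D̄₂(u) ∘ T` for every letter `u`, and `τ̄₁ = T⁻¹ τ̄₂`. -/
theorem quotient_realizations_isomorphic
    {U₁ U₂ V₁ V₂ : Type}
    [AddCommGroup U₁] [Module ℝ U₁] [FiniteDimensional ℝ U₁]
    [AddCommGroup U₂] [Module ℝ U₂] [FiniteDimensional ℝ U₂]
    [AddCommGroup V₁] [Module ℝ V₁] [FiniteDimensional ℝ V₁]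
    [AddCommGroup V₂] [Module ℝ V₂] [FiniteDimensional ℝ V₂]
    (R₁ : QuasiRealization M U₁) (R₂ : QuasiRealization M U₂)
    (hequiv : ∀ w : FreeMonoid M, R₁.proc w = R₂.proc w)
    (Rb₁ : QuasiRealization M V₁) (Rb₂ : QuasiRealization M V₂)
    (h₁ : IsQuotientRealization R₁ Rb₁) (h₂ : IsQuotientRealization R₂ Rb₂) :
    ∃ T : V₁ ≃ₗ[ℝ] V₂,
      (∀ x : V₁, Rb₁.pi x = Rb₂.pi (T x)) ∧
      (∀ (u : M) (x : V₁),
        Rb₁.D (FreeMonoid.of u) x = T.symm (Rb₂.D (FreeMonoid.of u) (T x))) ∧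
      Rb₁.tau = T.symm Rb₂.tau :=
  quotient_realizations_isomorphic_general R₁ R₂ hequiv Rb₁ Rb₂ h₁ h₂
end

section
/- Let R = (V, π, D, τ) be a regular quasi-realization of a nonnegative process p (i.e., no equivalent quasi-realization of smaller dimension exists). Then every convex cone C ⊆ V satisfying τ ∈ C, D(w)(C) ⊆ C for all w ∈ M*, and π ∈ C* is proper—pointed (C ∩ (−C) = {0}) and generating (span C = V)—and τ is an order unit of C: for every v ∈ V there exists λ > 0 with λτ − v ∈ C. -/
/-!
Restricting `R` to a `D`-invariant subspace containing `τ`, or passing to the quotient by a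
`D`-invariant subspace of `ker π`, gives a quasi-realization of the same process; by regularity the
former subspace is all of `V` and the latter is zero. The lineality space `C ∩ -C` is of the second
kind. The order ideal `{v | -tτ ≤ v ≤ tτ for some t ≥ 0}` of the cone `C ∪ {0}` is of the first
kind, because `τ - D(w)τ ∈ C ∪ {0}`: for a letter `u`, stationarity of `τ` gives
`τ - D(u)τ = ∑_{u' ≠ u} D(u')τ`.
-/

namespace ConvexCone

variable {𝕜 E : Type*} [Semiring 𝕜] [PartialOrder 𝕜] [IsOrderedRing 𝕜] [AddCommMonoid E]
  [Module 𝕜 E] {C : ConvexCone 𝕜 E} {x y : E}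

/-- The pointed cone `C ∪ {0}` (a `ConvexCone` need not contain `0`). -/
def insertZero (C : ConvexCone 𝕜 E) : PointedCone 𝕜 E where
  carrier := insert 0 C
  add_mem' := by
    rintro x y (rfl | hx) (rfl | hy)
    · simp
    · simpa using Or.inr hy
    · simpa using Or.inr hx
    · exact Or.inr (C.add_mem hx hy)
  zero_mem' := Set.mem_insert _ _
  smul_mem' := by
    rintro ⟨c, hc⟩ x (rfl | hx)
    · simp
    · rcases hc.eq_or_lt with rfl | hc
      · simp
      · exact Or.inr (C.smul_mem hc hx)

lemma mem_insertZero_of_mem (hx : x ∈ C) : x ∈ C.insertZero := Or.inr hx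

lemma add_mem_of_mem_insertZero (hx : x ∈ C) (hy : y ∈ C.insertZero) : x + y ∈ C := by
  rcases hy with rfl | hy
  · simpa using hx
  · exact C.add_mem hx hy

lemma mapsTo_insertZero {f : E →ₗ[𝕜] E} (hf : ∀ x ∈ C, f x ∈ C) :
    ∀ x ∈ C.insertZero, f x ∈ C.insertZero := by
  rintro x (rfl | hx)
  · simp
  · exact Or.inr (hf x hx)

end ConvexCone

lemma ConvexCone.IsReproducing.of_forall_exists_smul_sub_mem {𝕜 E : Type*} [Semiring 𝕜]
    [PartialOrder 𝕜] [AddCommGroup E] [Module 𝕜 E] {C : ConvexCone 𝕜 E} {e : E} (he : e ∈ C)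
    (h : ∀ v, ∃ t : 𝕜, 0 < t ∧ t • e - v ∈ C) : C.IsReproducing :=
  .of_univ_subset fun v _ =>
    let ⟨t, ht, hv⟩ := h v
    ⟨t • e, C.smul_mem ht he, t • e - v, hv, sub_sub_cancel _ _⟩

namespace PointedCone

variable {𝕜 E : Type*} [CommRing 𝕜] [LinearOrder 𝕜] [IsOrderedRing 𝕜] [AddCommGroup E]
  [Module 𝕜 E] {P : PointedCone 𝕜 E} {e : E}

def orderIdeal (P : PointedCone 𝕜 E) (e : E) : Submodule 𝕜 E where
  carrier := {v | ∃ t : 𝕜, 0 ≤ t ∧ t • e - v ∈ P ∧ t • e + v ∈ P}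
  zero_mem' := ⟨0, le_rfl, by simp⟩
  add_mem' := by
    rintro v w ⟨s, hs, hv₁, hv₂⟩ ⟨t, ht, hw₁, hw₂⟩
    refine ⟨s + t, add_nonneg hs ht, ?_, ?_⟩
    · convert P.add_mem hv₁ hw₁ using 1; module
    · convert P.add_mem hv₂ hw₂ using 1; module
  smul_mem' := by
    rintro c v ⟨t, ht, hv₁, hv₂⟩
    rcases le_total 0 c with hc | hc
    · refine ⟨c * t, mul_nonneg hc ht, ?_, ?_⟩
      · convert P.smul_mem hc hv₁ using 1; module
      · convert P.smul_mem hc hv₂ using 1; module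
    · refine ⟨-c * t, mul_nonneg (neg_nonneg.2 hc) ht, ?_, ?_⟩
      · convert P.smul_mem (neg_nonneg.2 hc) hv₂ using 1; module
      · convert P.smul_mem (neg_nonneg.2 hc) hv₁ using 1; module

lemma mem_orderIdeal {v : E} :
    v ∈ P.orderIdeal e ↔ ∃ t : 𝕜, 0 ≤ t ∧ t • e - v ∈ P ∧ t • e + v ∈ P := .rfl

lemma self_mem_orderIdeal (he : e ∈ P) : e ∈ P.orderIdeal e :=
  ⟨1, zero_le_one, by simp, by simpa using P.add_mem he he⟩

lemma mapsTo_orderIdeal {f : E →ₗ[𝕜] E} (hf : ∀ x ∈ P, f x ∈ P) (hfe : e - f e ∈ P) :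
    ∀ v ∈ P.orderIdeal e, f v ∈ P.orderIdeal e := by
  rintro v ⟨t, ht, hv₁, hv₂⟩
  refine ⟨t, ht, ?_, ?_⟩
  · convert P.add_mem (P.smul_mem ht hfe) (hf _ hv₁) using 1
    simp only [map_sub, map_smul]; module
  · convert P.add_mem (P.smul_mem ht hfe) (hf _ hv₂) using 1
    simp only [map_add, map_smul]; module

end PointedCone

namespace QuasiRealization

variable {M : Type} [Fintype M] {V : Type} [AddCommGroup V] [Module ℝ V]

section Constructions

variable (R : QuasiRealization M V)

def restrict (W : Submodule ℝ V) (hW : ∀ w, ∀ x ∈ W, R.D w x ∈ W) (hτ : R.tau ∈ W) :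
    QuasiRealization M W where
  pi := R.pi.domRestrict W
  tau := ⟨R.tau, hτ⟩
  D := Representation.subrepresentation R.D W hW
  pi_stationary := by
    ext x
    simpa [LinearMap.sum_apply] using LinearMap.congr_fun R.pi_stationary x
  tau_stationary := by
    ext
    simpa [LinearMap.sum_apply] using R.tau_stationary

@[simp]
lemma proc_restrict (W : Submodule ℝ V) (hW : ∀ w, ∀ x ∈ W, R.D w x ∈ W) (hτ : R.tau ∈ W) :
    (R.restrict W hW hτ).proc = R.proc :=
  rfl

def quotient (L : Submodule ℝ V) (hL : ∀ w, ∀ x ∈ L, R.D w x ∈ L)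
    (hπ : L ≤ LinearMap.ker R.pi) : QuasiRealization M (V ⧸ L) where
  pi := L.liftQ R.pi hπ
  tau := L.mkQ R.tau
  D := Representation.quotient R.D L hL
  pi_stationary := by
    ext x
    simpa [LinearMap.sum_apply] using LinearMap.congr_fun R.pi_stationary x
  tau_stationary := by
    simpa [LinearMap.sum_apply] using congrArg L.mkQ R.tau_stationary

@[simp]
lemma proc_quotient (L : Submodule ℝ V) (hL : ∀ w, ∀ x ∈ L, R.D w x ∈ L)
    (hπ : L ≤ LinearMap.ker R.pi) : (R.quotient L hL hπ).proc = R.proc :=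
  rfl

def IsRegular : Prop :=
  ∀ (V' : Type) [AddCommGroup V'] [Module ℝ V'] [FiniteDimensional ℝ V']
    (R' : QuasiRealization M V'), (∀ w, R'.proc w = R.proc w) →
      Module.finrank ℝ V ≤ Module.finrank ℝ V'

end Constructions

variable {R : QuasiRealization M V}

lemma tau_sub_D_of_mem {P : PointedCone ℝ V} (hτ : R.tau ∈ P)
    (hP : ∀ w, ∀ x ∈ P, R.D w x ∈ P) (u : M) : R.tau - R.D (.of u) R.tau ∈ P := by
  classical
  have hsum : ∑ u' ∈ Finset.univ.erase u, R.D (.of u') R.tau = R.tau - R.D (.of u) R.tau := by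
    rw [Finset.sum_erase_eq_sub (Finset.mem_univ u), ← LinearMap.sum_apply, R.tau_stationary]
  exact hsum ▸ P.sum_mem fun u' _ => hP _ _ hτ

lemma tau_sub_D_mem {P : PointedCone ℝ V} (hτ : R.tau ∈ P)
    (hP : ∀ w, ∀ x ∈ P, R.D w x ∈ P) (w : FreeMonoid M) : R.tau - R.D w R.tau ∈ P := by
  induction w using FreeMonoid.inductionOn' with
  | one => simp
  | of_mul u w ih =>
    have hsplit : R.tau - R.D (.of u * w) R.tau
        = (R.tau - R.D (.of u) R.tau) + R.D (.of u) (R.tau - R.D w R.tau) := by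
      rw [map_mul, Module.End.mul_apply, map_sub]; abel
    exact hsplit ▸ P.add_mem (tau_sub_D_of_mem hτ hP u) (hP _ _ ih)

namespace IsRegular

variable [FiniteDimensional ℝ V] (hR : R.IsRegular)
include hR

lemma eq_top_of_tau_mem {W : Submodule ℝ V} (hW : ∀ w, ∀ x ∈ W, R.D w x ∈ W)
    (hτ : R.tau ∈ W) : W = ⊤ :=
  Submodule.eq_top_of_finrank_eq <|
    (Submodule.finrank_le W).antisymm (hR W _ (congrFun (R.proc_restrict W hW hτ)))

lemma eq_bot_of_le_ker {L : Submodule ℝ V} (hL : ∀ w, ∀ x ∈ L, R.D w x ∈ L)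
    (hπ : L ≤ LinearMap.ker R.pi) : L = ⊥ := by
  have hdim := hR _ _ (congrFun (R.proc_quotient L hL hπ))
  have hsum := Submodule.finrank_quotient_add_finrank L
  exact Submodule.finrank_eq_zero.1 (by omega)

lemma lineal_eq_bot {P : PointedCone ℝ V} (hP : ∀ w, ∀ x ∈ P, R.D w x ∈ P)
    (hπ : ∀ x ∈ P, 0 ≤ R.pi x) : P.lineal = ⊥ := by
  refine hR.eq_bot_of_le_ker (fun w x hx => ?_) fun x hx => ?_
  · simpa using And.intro (hP w x hx.1) (hP w (-x) hx.2)
  · have hneg : 0 ≤ -R.pi x := by simpa using hπ (-x) hx.2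
    exact LinearMap.mem_ker.2 (le_antisymm (neg_nonneg.1 hneg) (hπ x hx.1))

lemma orderIdeal_tau_eq_top {P : PointedCone ℝ V} (hτ : R.tau ∈ P)
    (hP : ∀ w, ∀ x ∈ P, R.D w x ∈ P) : P.orderIdeal R.tau = ⊤ :=
  hR.eq_top_of_tau_mem
    (fun w => PointedCone.mapsTo_orderIdeal (hP w) (tau_sub_D_mem hτ hP w))
    (PointedCone.self_mem_orderIdeal hτ)

variable {C : ConvexCone ℝ V}

lemma eq_zero_of_mem_of_neg_mem (hC : ∀ w, ∀ x ∈ C, R.D w x ∈ C) (hπ : ∀ x ∈ C, 0 ≤ R.pi x) (x : V)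
    (hx : x ∈ C) (hnx : -x ∈ C) : x = 0 := by
  have hπ' : ∀ x ∈ C.insertZero, 0 ≤ R.pi x := by
    rintro x (rfl | hx)
    exacts [by simp, hπ x hx]
  have hlineal := hR.lineal_eq_bot (fun w => C.mapsTo_insertZero (hC w)) hπ'
  exact (Submodule.eq_bot_iff _).1 hlineal x ⟨Or.inr hx, Or.inr hnx⟩

lemma exists_smul_tau_sub_mem (hτ : R.tau ∈ C) (hC : ∀ w, ∀ x ∈ C, R.D w x ∈ C) (v : V) :
    ∃ t : ℝ, 0 < t ∧ t • R.tau - v ∈ C := by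
  have htop := hR.orderIdeal_tau_eq_top (C.mem_insertZero_of_mem hτ)
    fun w => C.mapsTo_insertZero (hC w)
  obtain ⟨t, ht, hv, -⟩ := PointedCone.mem_orderIdeal.1 (htop ▸ Submodule.mem_top : v ∈ _)
  refine ⟨t + 1, by positivity, ?_⟩
  convert ConvexCone.add_mem_of_mem_insertZero hτ hv using 1
  module

end IsRegular

end QuasiRealization

theorem regular_realization_stable_cone_proper_general
    {M : Type} [Fintype M] {V : Type} [AddCommGroup V] [Module ℝ V]
    [FiniteDimensional ℝ V] (R : QuasiRealization M V)
    (hregular : ∀ (V' : Type) [AddCommGroup V'] [Module ℝ V'] [FiniteDimensional ℝ V']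
      (R' : QuasiRealization M V'), (∀ w, R'.proc w = R.proc w) →
        Module.finrank ℝ V ≤ Module.finrank ℝ V') :
    ∀ C : ConvexCone ℝ V,
      R.tau ∈ C →
      (∀ w : FreeMonoid M, ∀ x ∈ C, R.D w x ∈ C) →
      (∀ x ∈ C, 0 ≤ R.pi x) →
      -- pointed
      (∀ x : V, x ∈ C → -x ∈ C → x = 0) ∧
      -- generating
      Submodule.span ℝ (C : Set V) = ⊤ ∧
      -- τ is an order unit of C
      (∀ v : V, ∃ lam : ℝ, 0 < lam ∧ lam • R.tau - v ∈ C) := by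
  intro C hτ hC hπ
  have hR : R.IsRegular := hregular
  have hunit := hR.exists_smul_tau_sub_mem hτ hC
  exact ⟨hR.eq_zero_of_mem_of_neg_mem hC hπ,
    (ConvexCone.IsReproducing.of_forall_exists_smul_sub_mem hτ hunit).span_eq_top, hunit⟩

/-- if `R` is a regular quasi-realization of a nonnegative process
(no equivalent quasi-realization of smaller dimension exists), then every convex cone
`C` with `τ ∈ C`, `D(w)(C) ⊆ C` and `π ∈ C*` is proper (pointed and generating), and
`τ` is an order unit of `C`. -/
theorem regular_realization_stable_cone_proper
    {M : Type} [Fintype M] {V : Type} [AddCommGroup V] [Module ℝ V]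
    [FiniteDimensional ℝ V] (R : QuasiRealization M V)
    (hnonneg : ∀ w : FreeMonoid M, 0 ≤ R.proc w)
    (hregular : ∀ (V' : Type) [AddCommGroup V'] [Module ℝ V'] [FiniteDimensional ℝ V']
      (R' : QuasiRealization M V'), (∀ w, R'.proc w = R.proc w) →
        Module.finrank ℝ V ≤ Module.finrank ℝ V') :
    ∀ C : ConvexCone ℝ V,
      R.tau ∈ C →
      (∀ w : FreeMonoid M, ∀ x ∈ C, R.D w x ∈ C) →
      (∀ x ∈ C, 0 ≤ R.pi x) →
      -- pointed
      (∀ x : V, x ∈ C → -x ∈ C → x = 0) ∧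
      -- generating
      Submodule.span ℝ (C : Set V) = ⊤ ∧
      -- τ is an order unit of C
      (∀ v : V, ∃ lam : ℝ, 0 < lam ∧ lam • R.tau - v ∈ C) :=
  regular_realization_stable_cone_proper_general R hregular
end

section
/- For any quasi-realization of a process p, the quotient realization is a regular realization: its dimension equals the order of p, the minimal dimension over all quasi-realizations of p. Consequently, every regular quasi-realization of p arises as the quotient realization of any equivalent quasi-realization. -/
variable {M : Type} [Fintype M]

/-!
The observation map `Φ v = (u ↦ π (D(u) v))` has kernel `W̃^⊥` and carries the accessible
subspace `W` onto the Hankel space `H = span {u ↦ p (u w) : w ∈ M*}`, which depends on `p` only.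
So the quotient realization `W ⧸ (W ∩ W̃^⊥)` is isomorphic to `H`. Any realization of `p` on `V'`
has `H ≤ Φ'(V')`, whence `dim H ≤ dim V'`; when `dim V'` is minimal, `Φ'` is an isomorphism onto
`H` and `Φ'⁻¹ ∘ Φ` is a projection exhibiting `V'` as the quotient realization.
-/

def hankelSpace {A : Type*} [Mul A] (p : A → ℝ) : Submodule ℝ (A → ℝ) :=
  Submodule.span ℝ (Set.range fun w u => p (u * w))

namespace QuasiRealization

variable {U V : Type} [AddCommGroup U] [Module ℝ U] [AddCommGroup V] [Module ℝ V]

def obsMap (R : QuasiRealization M U) : U →ₗ[ℝ] (FreeMonoid M → ℝ) :=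
  LinearMap.pi fun u => R.pi ∘ₗ R.D u

variable (R : QuasiRealization M U)

@[simp]
lemma obsMap_apply (v : U) (u : FreeMonoid M) : R.obsMap v u = R.pi (R.D u v) := rfl

lemma obsMap_tau : R.obsMap R.tau = R.proc := rfl

lemma obsMap_apply_one (v : U) : R.obsMap v 1 = R.pi v := by
  simp

lemma obsMap_D (w : FreeMonoid M) (v : U) :
    R.obsMap (R.D w v) = fun u => R.obsMap v (u * w) := by
  funext u
  simp

lemma ker_obsMap : LinearMap.ker R.obsMap = nullSpace R := by
  ext v
  rw [LinearMap.mem_ker, ← SetLike.mem_coe, nullSpace, observableSpace,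
    Submodule.coe_dualCoannihilator_span, Set.mem_ofPred_eq, Set.forall_mem_range, funext_iff]
  rfl

lemma map_obsMap_accessibleSpace :
    (accessibleSpace R).map R.obsMap = hankelSpace R.proc := by
  rw [accessibleSpace, Submodule.map_span, ← Set.range_comp, hankelSpace]
  congr 2
  funext w
  exact R.obsMap_D w R.tau

lemma hankelSpace_le_range_obsMap : hankelSpace R.proc ≤ LinearMap.range R.obsMap :=
  R.map_obsMap_accessibleSpace ▸ LinearMap.map_le_range

variable [FiniteDimensional ℝ U]

instance finiteDimensional_hankelSpace : FiniteDimensional ℝ (hankelSpace R.proc) :=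
  Submodule.finiteDimensional_of_le R.hankelSpace_le_range_obsMap

lemma finrank_hankelSpace_le : Module.finrank ℝ (hankelSpace R.proc) ≤ Module.finrank ℝ U :=
  (Submodule.finrank_mono R.hankelSpace_le_range_obsMap).trans (LinearMap.finrank_range_le _)

variable {R}

lemma range_obsMap_of_finrank_le
    (h : Module.finrank ℝ U ≤ Module.finrank ℝ (hankelSpace R.proc)) :
    LinearMap.range R.obsMap = hankelSpace R.proc :=
  (Submodule.eq_of_le_of_finrank_le R.hankelSpace_le_range_obsMap
    ((LinearMap.finrank_range_le _).trans h)).symm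

lemma obsMap_injective_of_finrank_le
    (h : Module.finrank ℝ U ≤ Module.finrank ℝ (hankelSpace R.proc)) :
    Function.Injective R.obsMap := by
  have hrange : Module.finrank ℝ U = Module.finrank ℝ (LinearMap.range R.obsMap) :=
    le_antisymm (range_obsMap_of_finrank_le h ▸ h) (LinearMap.finrank_range_le _)
  rw [← LinearMap.injective_rangeRestrict_iff,
    LinearMap.injective_iff_surjective_of_finrank_eq_finrank hrange]
  exact LinearMap.surjective_rangeRestrict _

end QuasiRealization

section IsQuotientRealization

open QuasiRealization

variable {U V : Type} [AddCommGroup U] [Module ℝ U] [AddCommGroup V] [Module ℝ V]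
  {R : QuasiRealization M U}

lemma range_obsMap_comp_subtype_accessibleSpace :
    LinearMap.range (R.obsMap ∘ₗ (accessibleSpace R).subtype) = hankelSpace R.proc := by
  rw [LinearMap.range_comp, Submodule.range_subtype, map_obsMap_accessibleSpace]

lemma IsQuotientRealization.proc_eq {Rb : QuasiRealization M V}
    (h : IsQuotientRealization R Rb) : Rb.proc = R.proc := by
  obtain ⟨L, -, -, hLD, hLtau, hLpi⟩ := h
  have hτ : R.tau ∈ accessibleSpace R := Submodule.subset_span ⟨1, by simp⟩
  have hDτ (w : FreeMonoid M) : R.D w R.tau ∈ accessibleSpace R := Submodule.subset_span ⟨w, rfl⟩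
  funext w
  rw [QuasiRealization.proc, hLtau ⟨_, hτ⟩ rfl, ← hLD w ⟨_, hτ⟩ ⟨_, hDτ w⟩ rfl, hLpi]
  rfl

lemma IsQuotientRealization.nonempty_linearEquiv_hankelSpace {Rb : QuasiRealization M V}
    (h : IsQuotientRealization R Rb) : Nonempty (V ≃ₗ[ℝ] hankelSpace R.proc) := by
  obtain ⟨L, hLsurj, hLker, -⟩ := h
  have hker : LinearMap.ker L = LinearMap.ker (R.obsMap ∘ₗ (accessibleSpace R).subtype) := by
    ext x
    rw [LinearMap.mem_ker, hLker, LinearMap.ker_comp, Submodule.mem_comap, ker_obsMap]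
    rfl
  exact ⟨(L.quotKerEquivOfSurjective hLsurj).symm ≪≫ₗ Submodule.quotEquivOfEq _ _ hker ≪≫ₗ
    LinearMap.quotKerEquivRange _ ≪≫ₗ
    LinearEquiv.ofEq _ _ range_obsMap_comp_subtype_accessibleSpace⟩

lemma isQuotientRealization_of_obsMap_comp_eq {R' : QuasiRealization M V}
    (hp : R'.proc = R.proc) (hinj : Function.Injective R'.obsMap)
    (L : accessibleSpace R →ₗ[ℝ] V) (hLsurj : Function.Surjective L)
    (hL : ∀ x, R'.obsMap (L x) = R.obsMap x) : IsQuotientRealization R R' := by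
  refine ⟨L, hLsurj, fun x => ?_, fun w x y hy => hinj ?_, fun t ht => hinj ?_, fun x => ?_⟩
  · rw [← ker_obsMap, LinearMap.mem_ker, ← hL, ← hinj.eq_iff, map_zero]
  · rw [hL, hy, obsMap_D, obsMap_D, hL]
  · rw [hL, ht, obsMap_tau, obsMap_tau, hp]
  · rw [← obsMap_apply_one, hL, obsMap_apply_one]

lemma isQuotientRealization_of_obsMap_injective {R' : QuasiRealization M V}
    (hp : R'.proc = R.proc) (hinj : Function.Injective R'.obsMap)
    (hrange : LinearMap.range R'.obsMap = hankelSpace R.proc) : IsQuotientRealization R R' := by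
  set ΦW := R.obsMap ∘ₗ (accessibleSpace R).subtype
  have hΦW : LinearMap.range ΦW = LinearMap.range R'.obsMap := by
    rw [hrange, range_obsMap_comp_subtype_accessibleSpace]
  let L := (LinearEquiv.ofInjective _ hinj).symm.toLinearMap ∘ₗ
    ΦW.codRestrict _ fun x => hΦW ▸ LinearMap.mem_range_self ΦW x
  have hL (x) : R'.obsMap (L x) = ΦW x := LinearEquiv.ofInjective_symm_apply (h := hinj) _ _
  refine isQuotientRealization_of_obsMap_comp_eq hp hinj L (fun v => ?_) hL
  obtain ⟨x, hx⟩ := hΦW.ge (LinearMap.mem_range_self R'.obsMap v)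
  exact ⟨x, hinj (by rw [hL, hx])⟩

end IsQuotientRealization

theorem quotient_realization_is_regular_general
    {U Vb : Type}
    [AddCommGroup U] [Module ℝ U]
    [AddCommGroup Vb] [Module ℝ Vb]
    (R : QuasiRealization M U) (Rb : QuasiRealization M Vb)
    (h : IsQuotientRealization R Rb) :
    -- the quotient realization has the minimal dimension (the order of p)
    (∀ (V' : Type) [AddCommGroup V'] [Module ℝ V'] [FiniteDimensional ℝ V']
      (R' : QuasiRealization M V'), (∀ w, R'.proc w = R.proc w) →
        Module.finrank ℝ Vb ≤ Module.finrank ℝ V') ∧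
    -- every regular quasi-realization of the process is a quotient realization of R
    (∀ (V' : Type) [AddCommGroup V'] [Module ℝ V'] [FiniteDimensional ℝ V']
      (R' : QuasiRealization M V'), (∀ w, R'.proc w = R.proc w) →
        (∀ (V'' : Type) [AddCommGroup V''] [Module ℝ V''] [FiniteDimensional ℝ V'']
          (R'' : QuasiRealization M V''), (∀ w, R''.proc w = R.proc w) →
            Module.finrank ℝ V' ≤ Module.finrank ℝ V'') →
        IsQuotientRealization R R') := by
  obtain ⟨e⟩ := h.nonempty_linearEquiv_hankelSpace
  have hVb : Module.finrank ℝ Vb = Module.finrank ℝ (hankelSpace R.proc) := e.finrank_eq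
  refine ⟨fun V' _ _ _ R' hp => ?_, fun V' _ _ _ R' hp hmin => ?_⟩
  · rw [hVb, ← funext hp]
    exact R'.finrank_hankelSpace_le
  · have hp' : R'.proc = R.proc := funext hp
    rw [← hp'] at e hVb
    have : FiniteDimensional ℝ Vb := e.symm.finiteDimensional
    have hdim : Module.finrank ℝ V' ≤ Module.finrank ℝ (hankelSpace R'.proc) :=
      hVb ▸ hmin Vb Rb (congrFun h.proc_eq)
    refine isQuotientRealization_of_obsMap_injective hp'
      (QuasiRealization.obsMap_injective_of_finrank_le hdim) ?_
    rw [QuasiRealization.range_obsMap_of_finrank_le hdim, hp']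

/-- the quotient realization of any quasi-realization is regular: its
dimension is minimal among all (finite-dimensional) quasi-realizations of the same
process.  Consequently every regular quasi-realization of the process arises as the
quotient realization of any equivalent quasi-realization. -/
theorem quotient_realization_is_regular
    {U Vb : Type}
    [AddCommGroup U] [Module ℝ U] [FiniteDimensional ℝ U]
    [AddCommGroup Vb] [Module ℝ Vb] [FiniteDimensional ℝ Vb]
    (R : QuasiRealization M U) (Rb : QuasiRealization M Vb)
    (h : IsQuotientRealization R Rb) :
    -- the quotient realization has the minimal dimension (the order of p)
    (∀ (V' : Type) [AddCommGroup V'] [Module ℝ V'] [FiniteDimensional ℝ V']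
      (R' : QuasiRealization M V'), (∀ w, R'.proc w = R.proc w) →
        Module.finrank ℝ Vb ≤ Module.finrank ℝ V') ∧
    -- every regular quasi-realization of the process is a quotient realization of R
    (∀ (V' : Type) [AddCommGroup V'] [Module ℝ V'] [FiniteDimensional ℝ V']
      (R' : QuasiRealization M V'), (∀ w, R'.proc w = R.proc w) →
        (∀ (V'' : Type) [AddCommGroup V''] [Module ℝ V''] [FiniteDimensional ℝ V'']
          (R'' : QuasiRealization M V''), (∀ w, R''.proc w = R.proc w) →
            Module.finrank ℝ V' ≤ Module.finrank ℝ V'') →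
        IsQuotientRealization R R') :=
  quotient_realization_is_regular_general R Rb h
end

section
/- Let H be a finite-dimensional Hilbert space, W ⊆ B(H)^sa a subspace containing the identity, and W̃ ⊆ (B(H)^sa)* a subspace. Then the spaces (W/(W ∩ W̃^⊥))* and (W̃ + W^⊥)/W^⊥ are naturally isomorphic. If moreover W = span(W⁺) and (W ∩ W̃^⊥) ∩ S⁺ = {0}, then: (1) the cone C = L(W⁺), the image of W⁺ under the quotient map L : W → W/(W ∩ W̃^⊥), is a proper SDR cone; (2) under the natural isomorphism, the dual cone of C equals (W̃ + W^⊥)⁺/W^⊥, the image under the quotient by W^⊥ of the positive semidefinite functionals contained in W̃ + W^⊥. -/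
/-!
The pairing `(σ, x) ↦ σ x` of `W̃ + W^⊥` with `W` has left kernel `W^⊥`, and the functionals it
induces on `W` are exactly those vanishing on `W ∩ W̃^⊥ = ker L`, because
`(W ∩ W̃^⊥)^⊥ = W̃ + W^⊥` in finite dimension; this identifies `Vd` with `V*`.
The cone `L(W⁺)` is pointed because `ker L` meets `W⁺` only in `0`, and generating because `W⁺`
spans `W`. A functional on `V` that is nonnegative on `L(W⁺)` pulls back to a functional on `W`
nonnegative on `W⁺`. As `1 ∈ W` is an order unit (every Hermitian matrix plus a large multiple of
`1` is positive semidefinite), the M. Riesz extension theorem extends it to a positive functional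
on all matrices; that functional vanishes on `W ∩ W̃^⊥`, so it lies in `W̃ + W^⊥`.
-/

open Matrix
open scoped ComplexOrder

def IsSDRCone {V : Type} [AddCommGroup V] [Module ℝ V] (C : Set V) : Prop :=
  ∃ (d : ℕ) (Wd : Submodule ℝ (Mat d)) (_ : ∀ A ∈ Wd, A.IsHermitian)
    (Lm : ↥Wd →ₗ[ℝ] V),
    C = {v | ∃ x : ↥Wd, ((x : Mat d)).PosSemidef ∧ v = Lm x}

section Duality

open LinearMap in
theorem LinearMap.exists_equiv_dual_of_pairing {R M A V Vd : Type*} [CommRing R]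
    [AddCommGroup M] [Module R M] [AddCommGroup A] [Module R A] [AddCommGroup V] [Module R V]
    [AddCommGroup Vd] [Module R Vd] (L : M →ₗ[R] V) (hL : Function.Surjective L)
    (Lt : A →ₗ[R] Vd) (hLt : Function.Surjective Lt) (B : A →ₗ[R] Module.Dual R M)
    (hker : ker Lt = ker B) (hrange : range B = range L.dualMap) :
    ∃ e : Vd ≃ₗ[R] Module.Dual R V, ∀ σ x, e (Lt σ) (L x) = B σ x := by
  let e := (Lt.quotKerEquivOfSurjective hLt).symm ≪≫ₗ Submodule.quotEquivOfEq _ _ hker ≪≫ₗ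
    B.quotKerEquivRange ≪≫ₗ LinearEquiv.ofEq _ _ hrange ≪≫ₗ
    (LinearEquiv.ofInjective L.dualMap (dualMap_injective_of_surjective hL)).symm
  have he σ : L.dualMap (e (Lt σ)) = B σ := by simp [e]
  exact ⟨e, fun σ x => congr($(he σ) x)⟩

variable {𝕜 E : Type*} [Field 𝕜] [AddCommGroup E] [Module 𝕜 E]

theorem Submodule.mem_sup_dualAnnihilator_iff {W : Submodule 𝕜 E}
    {Wt : Submodule 𝕜 (Module.Dual 𝕜 E)} [FiniteDimensional 𝕜 Wt] {σ : Module.Dual 𝕜 E} :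
    σ ∈ Wt ⊔ W.dualAnnihilator ↔ ∀ x ∈ W, x ∈ Wt.dualCoannihilator → σ x = 0 := by
  rw [← Subspace.dualCoannihilator_dualAnnihilator_eq (W := Wt), sup_comm,
    ← Subspace.dualAnnihilator_inf_eq, Subspace.dualCoannihilator_dualAnnihilator_eq,
    mem_dualAnnihilator]
  exact ⟨fun h x hW hWt => h x ⟨hW, hWt⟩, fun h x hx => h x hx.1 hx.2⟩

theorem Submodule.range_dualRestrict_comp_sup_dualAnnihilator (W : Submodule 𝕜 E)
    (Wt : Submodule 𝕜 (Module.Dual 𝕜 E)) [FiniteDimensional 𝕜 Wt] :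
    LinearMap.range (W.dualRestrict ∘ₗ (Wt ⊔ W.dualAnnihilator).subtype) =
      (Wt.dualCoannihilator.comap W.subtype).dualAnnihilator := by
  ext φ
  rw [mem_dualAnnihilator]
  constructor
  · rintro ⟨σ, rfl⟩ x hx
    exact mem_sup_dualAnnihilator_iff.mp σ.2 x x.2 hx
  · intro hφ
    obtain ⟨g, rfl⟩ := LinearMap.exists_extend φ
    exact ⟨⟨g, mem_sup_dualAnnihilator_iff.mpr fun x hW hWt => hφ ⟨x, hW⟩ hWt⟩, rfl⟩

end Duality

section PositiveExtension

variable {ι : Type*}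

theorem Matrix.IsHermitian.exists_posSemidef_smul_one_add [Fintype ι] [DecidableEq ι]
    {A : Matrix ι ι ℂ} (hA : A.IsHermitian) : ∃ c : ℝ, (c • (1 : Matrix ι ι ℂ) + A).PosSemidef := by
  open scoped MatrixOrder Matrix.Norms.L2Operator in
  refine ⟨‖-A‖, ?_⟩
  have := IsSelfAdjoint.le_algebraMap_norm_self (a := -A) hA.neg
  rwa [Matrix.le_iff, Algebra.algebraMap_eq_smul_one, sub_neg_eq_add] at this

theorem Matrix.PosSemidef.eq_zero_of_neg {𝕜 : Type*} [RCLike 𝕜] {A : Matrix ι ι 𝕜}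
    (hA : A.PosSemidef) (hnA : (-A).PosSemidef) : A = 0 := by
  open scoped MatrixOrder in
  exact le_antisymm (by rwa [Matrix.le_iff, zero_sub]) hA.nonneg

variable (ι) in
noncomputable def hermitianPartNonnegCone : PointedCone ℝ (Matrix ι ι ℂ) where
  carrier := {A | (selfAdjointPart ℝ A : Matrix ι ι ℂ).PosSemidef}
  zero_mem' := by simpa using PosSemidef.zero
  add_mem' {A B} hA hB := by
    simpa only [Set.mem_ofPred_eq, map_add, AddSubgroup.coe_add] using hA.add hB
  smul_mem' c A (hA : (selfAdjointPart ℝ A : Matrix ι ι ℂ).PosSemidef) := by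
    show (selfAdjointPart ℝ ((c : ℝ) • A) : Matrix ι ι ℂ).PosSemidef
    simpa only [map_smul, selfAdjoint.val_smul] using hA.smul c.2

theorem mem_hermitianPartNonnegCone {A : Matrix ι ι ℂ} :
    A ∈ hermitianPartNonnegCone ι ↔ (selfAdjointPart ℝ A : Matrix ι ι ℂ).PosSemidef :=
  Iff.rfl

theorem exists_posSemidef_nonneg_extension [Fintype ι] [DecidableEq ι]
    {W : Submodule ℝ (Matrix ι ι ℂ)} (hherm : ∀ A ∈ W, A.IsHermitian)
    (hI : (1 : Matrix ι ι ℂ) ∈ W) (φ : W →ₗ[ℝ] ℝ)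
    (hφ : ∀ x : W, (x : Matrix ι ι ℂ).PosSemidef → 0 ≤ φ x) :
    ∃ g : Module.Dual ℝ (Matrix ι ι ℂ),
      (∀ P : Matrix ι ι ℂ, P.PosSemidef → 0 ≤ g P) ∧ ∀ x : W, g x = φ x := by
  have hpart {A : Matrix ι ι ℂ} (hA : A.IsHermitian) : (selfAdjointPart ℝ A : Matrix ι ι ℂ) = A :=
    IsSelfAdjoint.coe_selfAdjointPart_apply ℝ hA
  obtain ⟨g, hgφ, hg⟩ := riesz_extension (hermitianPartNonnegCone ι) ⟨W, φ⟩
    (fun x hx => hφ x (by rwa [mem_hermitianPartNonnegCone, hpart (hherm _ x.2)] at hx))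
    (fun y => by
      have hy : (selfAdjointPart ℝ y : Matrix ι ι ℂ).IsHermitian := (selfAdjointPart ℝ y).2
      obtain ⟨c, hc⟩ := hy.exists_posSemidef_smul_one_add
      refine ⟨⟨c • 1, W.smul_mem c hI⟩, ?_⟩
      rwa [mem_hermitianPartNonnegCone, map_add, map_smul, AddSubgroup.coe_add,
        selfAdjoint.val_smul, hpart isHermitian_one])
  exact ⟨g, fun P hP => hg P (by rwa [mem_hermitianPartNonnegCone, hpart hP.1]), hgφ⟩

end PositiveExtension

section QuotientCone

variable {ι V : Type*} [AddCommGroup V] [Module ℝ V]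

theorem eq_zero_of_mem_posSemidef_image_of_neg_mem {𝕜 : Type*} [RCLike 𝕜]
    {W : Submodule ℝ (Matrix ι ι 𝕜)} {L : W →ₗ[ℝ] V}
    (hK : ∀ x : W, L x = 0 → (x : Matrix ι ι 𝕜).PosSemidef → x = 0) {v : V}
    (hv : ∃ x : W, (x : Matrix ι ι 𝕜).PosSemidef ∧ v = L x)
    (hnv : ∃ x : W, (x : Matrix ι ι 𝕜).PosSemidef ∧ -v = L x) : v = 0 := by
  obtain ⟨x, hx, rfl⟩ := hv
  obtain ⟨y, hy, hyx⟩ := hnv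
  have hxy : x + y = 0 := hK (x + y) (by rw [map_add, ← hyx, add_neg_cancel]) (hx.add hy)
  rw [← neg_eq_of_add_eq_zero_right hxy, Submodule.coe_neg] at hy
  rw [Submodule.coe_eq_zero.mp (hx.eq_zero_of_neg hy), map_zero]

theorem nonneg_on_posSemidef_image_iff [Fintype ι] [DecidableEq ι]
    {W : Submodule ℝ (Matrix ι ι ℂ)} (hherm : ∀ A ∈ W, A.IsHermitian)
    (hI : (1 : Matrix ι ι ℂ) ∈ W) {Wt : Submodule ℝ (Module.Dual ℝ (Matrix ι ι ℂ))}
    {L : W →ₗ[ℝ] V} (hLker : ∀ x : W, L x = 0 ↔ (x : Matrix ι ι ℂ) ∈ Wt.dualCoannihilator)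
    (f : Module.Dual ℝ V) :
    (∀ x : W, (x : Matrix ι ι ℂ).PosSemidef → 0 ≤ f (L x)) ↔
      ∃ σ : ↥(Wt ⊔ W.dualAnnihilator),
        (∀ P : Matrix ι ι ℂ, P.PosSemidef → 0 ≤ (σ : Module.Dual ℝ (Matrix ι ι ℂ)) P) ∧
        ∀ x : W, f (L x) = (σ : Module.Dual ℝ (Matrix ι ι ℂ)) x := by
  constructor
  · intro hf
    obtain ⟨g, hg, hgf⟩ := exists_posSemidef_nonneg_extension hherm hI (f ∘ₗ L) hf
    have hgmem : g ∈ Wt ⊔ W.dualAnnihilator := Submodule.mem_sup_dualAnnihilator_iff.mpr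
      fun x hW hWt => by rw [hgf ⟨x, hW⟩, LinearMap.comp_apply, (hLker _).mpr hWt, map_zero]
    exact ⟨⟨g, hgmem⟩, hg, fun x => (hgf x).symm⟩
  · rintro ⟨σ, hσ, hσf⟩ x hx
    exact hσf x ▸ hσ _ hx

end QuotientCone

/-- let `W ⊆ B(H)ˢᵃ` be a subspace containing the identity and
`W̃ ⊆ (B(H)ˢᵃ)*` a subspace of functionals.  Present the quotient `V = W/(W ∩ W̃^⊥)`
by a surjective map `L` with kernel `W ∩ W̃^⊥`, and the quotient
`Vd = (W̃ + W^⊥)/W^⊥` by a surjective map `Lt` with kernel `W^⊥`.  Then `Vd` and the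
dual space `V*` are naturally isomorphic (via the evaluation pairing).  If moreover
`W = span(W⁺)` and `(W ∩ W̃^⊥) ∩ S⁺ = {0}`, then (1) the cone `C = L(W⁺)` is a
proper SDR cone, and (2) the dual cone of `C` equals the image
`(W̃ + W^⊥)⁺/W^⊥` of the positive semidefinite functionals of `W̃ + W^⊥`. -/
theorem quotient_dual_iso_and_SDR_cone
    {n : ℕ} (W : Submodule ℝ (Mat n))
    (hherm : ∀ A ∈ W, A.IsHermitian) (hI : (1 : Mat n) ∈ W)
    (Wt : Submodule ℝ (Module.Dual ℝ (Mat n)))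
    (V Vd : Type) [AddCommGroup V] [Module ℝ V] [AddCommGroup Vd] [Module ℝ Vd]
    -- L : W → V is the quotient map by K = W ∩ W̃^⊥
    (L : ↥W →ₗ[ℝ] V) (hL : Function.Surjective L)
    (hLker : ∀ x : ↥W, L x = 0 ↔ (x : Mat n) ∈ Wt.dualCoannihilator)
    -- Lt : W̃ + W^⊥ → Vd is the quotient map by W^⊥
    (Lt : ↥(Wt ⊔ W.dualAnnihilator) →ₗ[ℝ] Vd) (hLt : Function.Surjective Lt)
    (hLtker : ∀ σ : ↥(Wt ⊔ W.dualAnnihilator),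
      Lt σ = 0 ↔ (σ : Module.Dual ℝ (Mat n)) ∈ W.dualAnnihilator) :
    -- the two spaces are naturally isomorphic, via the evaluation pairing
    (∃ e : Vd ≃ₗ[ℝ] Module.Dual ℝ V,
      ∀ (σ : ↥(Wt ⊔ W.dualAnnihilator)) (x : ↥W),
        e (Lt σ) (L x) = (σ : Module.Dual ℝ (Mat n)) (x : Mat n)) ∧
    -- under the additional hypotheses on positivity:
    ((Submodule.span ℝ {x : ↥W | ((x : Mat n)).PosSemidef} = ⊤) →
     (∀ x : Mat n, x ∈ W → x ∈ Wt.dualCoannihilator → x.PosSemidef → x = 0) →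
      -- (1) C = L(W⁺) is a proper SDR cone
      (IsSDRCone {v : V | ∃ x : ↥W, ((x : Mat n)).PosSemidef ∧ v = L x} ∧
        (∀ v : V, (∃ x : ↥W, ((x : Mat n)).PosSemidef ∧ v = L x) →
          (∃ x : ↥W, ((x : Mat n)).PosSemidef ∧ -v = L x) → v = 0) ∧
        Submodule.span ℝ {v : V | ∃ x : ↥W, ((x : Mat n)).PosSemidef ∧ v = L x} = ⊤) ∧
      -- (2) dual cone of C = image of the positive part of W̃ + W^⊥
      (∀ f : Module.Dual ℝ V,
        (∀ x : ↥W, ((x : Mat n)).PosSemidef → 0 ≤ f (L x)) ↔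
          ∃ σ : ↥(Wt ⊔ W.dualAnnihilator),
            (∀ P : Mat n, P.PosSemidef → 0 ≤ (σ : Module.Dual ℝ (Mat n)) P) ∧
            ∀ x : ↥W, f (L x) = (σ : Module.Dual ℝ (Mat n)) (x : Mat n))) := by
  have hkerL : LinearMap.ker L = Wt.dualCoannihilator.comap W.subtype := by
    ext x; exact hLker x
  have hkerLt : LinearMap.ker Lt = W.dualAnnihilator.comap (Wt ⊔ W.dualAnnihilator).subtype := by
    ext σ; exact hLtker σ
  have hdual := LinearMap.exists_equiv_dual_of_pairing (A := ↥(Wt ⊔ W.dualAnnihilator))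
    L hL Lt hLt (W.dualRestrict ∘ₗ (Wt ⊔ W.dualAnnihilator).subtype)
    (by rw [hkerLt, LinearMap.ker_comp, Submodule.dualRestrict_ker_eq_dualAnnihilator])
    (by rw [Submodule.range_dualRestrict_comp_sup_dualAnnihilator,
      LinearMap.range_dualMap_eq_dualAnnihilator_ker, hkerL])
  have hC : {v : V | ∃ x : ↥W, ((x : Mat n)).PosSemidef ∧ v = L x} =
      L '' {x : ↥W | ((x : Mat n)).PosSemidef} := by
    ext v; simp [eq_comm]
  refine ⟨hdual, fun hspan hKpos => ⟨⟨⟨n, W, hherm, L, rfl⟩, ?_, ?_⟩,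
    nonneg_on_posSemidef_image_iff hherm hI hLker⟩⟩
  · exact fun v => eq_zero_of_mem_posSemidef_image_of_neg_mem
      fun x hx hpos => Subtype.ext (hKpos x x.2 ((hLker x).mp hx) hpos)
  · rw [hC, Submodule.span_image, hspan, Submodule.map_top, LinearMap.range_eq_top.mpr hL]
end

section
/- Let W ⊂ M₄(ℂ) be the space of tridiagonal 4×4 matrices (A with A_{jk} = 0 whenever |j − k| > 1) and let K_ℂ ⊂ W be the traceless diagonal matrices. There is no positive, Hermitian-preserving linear map F : W → W (i.e., F(X*) = F(X)* and F maps every positive semidefinite element of W to a positive semidefinite element of W) satisfying: F(|1⟩⟨2|) − |1⟩⟨2| ∈ K_ℂ, F(|2⟩⟨3|) − |3⟩⟨4| ∈ K_ℂ, F(|3⟩⟨4|) − |2⟩⟨3| ∈ K_ℂ, and F(|j⟩⟨j|) is a nonnegative diagonal matrix of unit trace for each j = 1, 2, 3, 4. -/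
open Matrix
open scoped ComplexOrder

/-- The subspace of tridiagonal `4 × 4` complex matrices:
`A j k = 0` whenever `|j - k| > 1`. -/
noncomputable def tridiag : Submodule ℂ (Matrix (Fin 4) (Fin 4) ℂ) where
  carrier := {A | ∀ j k : Fin 4, 1 < |(j : ℤ) - (k : ℤ)| → A j k = 0}
  add_mem' := by
    intro A B hA hB j k h
    simp [Matrix.add_apply, hA j k h, hB j k h]
  zero_mem' := by intro j k _; simp
  smul_mem' := by
    intro c A hA j k h
    simp [Matrix.smul_apply, hA j k h]

/-- The subspace of traceless diagonal `4 × 4` complex matrices. -/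
noncomputable def tracelessDiag : Submodule ℂ (Matrix (Fin 4) (Fin 4) ℂ) where
  carrier := {A | (∀ j k : Fin 4, j ≠ k → A j k = 0) ∧ A.trace = 0}
  add_mem' := by
    rintro A B ⟨hA, hA'⟩ ⟨hB, hB'⟩
    refine ⟨fun j k h => by simp [Matrix.add_apply, hA j k h, hB j k h], ?_⟩
    simp [Matrix.trace_add, hA', hB']
  zero_mem' := ⟨fun j k _ => rfl, by simp⟩
  smul_mem' := by
    rintro c A ⟨hA, hA'⟩
    refine ⟨fun j k h => by simp [Matrix.smul_apply, hA j k h], ?_⟩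
    simp [Matrix.trace_smul, hA']

/-!
Test positivity on `E_ii + E_jj + s (E_ij + E_ji) = (e_i + s e_j)(e_i + s e_j)^*`, `s = ±1`
(indices from `0`). If `F E_ij ≡ E_pq` modulo traceless diagonals, the image is positive of
trace `2` with `s (Y_pq + Y_qp) = 2`, so all its weight sits on `{p, q}`: its diagonal vanishes
elsewhere. Averaging over `s`, so do the diagonals of `F E_ii` and `F E_jj`. As `E_01 ↦ E_01` and
`E_12 ↦ E_23`, the diagonal of `F E_11` vanishes off `{0, 1}` and off `{2, 3}`, contradicting
`trace (F E_11) = 1`.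
-/

section

variable {ι : Type*} [Fintype ι] [DecidableEq ι]

theorem Matrix.PosSemidef.mul_apply_add_star_mul_apply_le {Y : Matrix ι ι ℂ}
    (hY : Y.PosSemidef) (p q : ι) {s : ℂ} (hs : star s * s = 1) :
    s * Y p q + star s * Y q p ≤ Y p p + Y q q := by
  rw [← sub_nonneg]
  have h := hY.dotProduct_mulVec_nonneg (Pi.single p 1 - s • Pi.single q 1)
  simp only [star_sub, star_smul, Pi.star_single, star_one, mulVec_sub, mulVec_smul,
    dotProduct_sub, sub_dotProduct, dotProduct_smul, smul_dotProduct, single_one_dotProduct,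
    mulVec_single_one, col_apply, smul_eq_mul] at h
  convert h using 1
  linear_combination (-Y q q) * hs

theorem Matrix.PosSemidef.diag_eq_zero_of_trace_eq {Y : Matrix ι ι ℂ} (hY : Y.PosSemidef)
    {p q k : ι} (hpq : p ≠ q) (hkp : k ≠ p) (hkq : k ≠ q) {s : ℂ} (hs : star s * s = 1)
    (htr : Y.trace = s * Y p q + star s * Y q p) : Y k k = 0 := by
  have hdiag : Y p p + Y q q + Y k k ≤ Y.trace := by
    have hsub : ({p, q, k} : Finset ι) ⊆ Finset.univ := Finset.subset_univ _
    have := Finset.sum_le_sum_of_subset_of_nonneg hsub (f := fun i => Y i i)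
      (fun i _ _ => hY.diag_nonneg)
    simpa [Matrix.trace, Finset.sum_insert, hpq, hkp.symm, hkq.symm, add_assoc] using this
  have hoff : Y.trace ≤ Y p p + Y q q := htr ▸ hY.mul_apply_add_star_mul_apply_le p q hs
  exact le_antisymm ((add_le_iff_nonpos_right _).mp (hdiag.trans hoff)) hY.diag_nonneg

theorem Matrix.posSemidef_single_self_one (i : ι) : (single i i (1 : ℂ)).PosSemidef := by
  simpa [single_eq_single_vecMulVec_single] using
    posSemidef_vecMulVec_self_star (Pi.single i (1 : ℂ))

theorem Matrix.posSemidef_single_add_single_add_smul_single (i j : ι) {s : ℂ}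
    (hs : star s * s = 1) :
    (single i i 1 + single j j 1 + star s • single i j 1 + s • single j i 1 :
      Matrix ι ι ℂ).PosSemidef := by
  convert posSemidef_vecMulVec_self_star (Pi.single i 1 + s • Pi.single j (1 : ℂ)) using 1
  simp only [star_add, star_smul, Pi.star_single, star_one, add_vecMulVec, vecMulVec_add,
    smul_vecMulVec, vecMulVec_smul, ← single_eq_single_vecMulVec_single]
  rw [smul_add, smul_smul, hs, one_smul]
  abel

variable {W : Submodule ℂ (Matrix ι ι ℂ)} {F : Matrix ι ι ℂ →ₗ[ℂ] Matrix ι ι ℂ}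

theorem apply_single_self_diag_eq_zero
    (hH : ∀ A ∈ W, F Aᴴ = (F A)ᴴ) (hPos : ∀ A ∈ W, A.PosSemidef → (F A).PosSemidef)
    {i j p q k : ι} (hii : single i i 1 ∈ W) (hjj : single j j 1 ∈ W)
    (hij : single i j 1 ∈ W) (hji : single j i 1 ∈ W)
    (hpq : p ≠ q) (hkp : k ≠ p) (hkq : k ≠ q)
    (hBpq : F (single i j 1) p q = 1) (hBqp : F (single i j 1) q p = 0)
    (hBtr : (F (single i j 1)).trace = 0)
    (hDi : (F (single i i 1)).IsDiag) (hDj : (F (single j j 1)).IsDiag)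
    (hDi_tr : (F (single i i 1)).trace = 1) (hDj_tr : (F (single j j 1)).trace = 1) :
    F (single i i 1) k k = 0 ∧ F (single j j 1) k k = 0 := by
  set B := F (single i j 1)
  have hBH : F (single j i 1) = Bᴴ := by simpa using hH _ hij
  have hvanish (s : ℂ) (hs : star s * s = 1) :
      F (single i i 1) k k + F (single j j 1) k k + (star s * B k k + s * star (B k k)) = 0 := by
    set A : Matrix ι ι ℂ :=
      single i i 1 + single j j 1 + star s • single i j 1 + s • single j i 1
    have hFA : F A = F (single i i 1) + F (single j j 1) + (star s • B + s • Bᴴ) := by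
      simp only [A, map_add, map_smul, hBH]; abel
    have hA : A ∈ W :=
      W.add_mem (W.add_mem (W.add_mem hii hjj) (W.smul_mem _ hij)) (W.smul_mem _ hji)
    have htr : (F A).trace = s * F A p q + star s * F A q p := by
      simp only [hFA, trace_add, trace_smul, trace_conjTranspose, hDi_tr, hDj_tr, hBtr,
        Matrix.add_apply, Matrix.smul_apply, conjTranspose_apply, hDi hpq, hDj hpq, hDi hpq.symm,
        hDj hpq.symm, hBpq, hBqp, smul_eq_mul, star_zero, star_one]
      linear_combination (-2 : ℂ) * hs
    have hY := hPos A hA (posSemidef_single_add_single_add_smul_single i j hs)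
    simpa [hFA] using hY.diag_eq_zero_of_trace_eq hpq hkp hkq hs htr
  have hplus := hvanish 1 (by simp)
  have hminus := hvanish (-1) (by simp)
  simp only [star_one, star_neg, one_mul, neg_mul] at hplus hminus
  have hD : F (single i i 1) k k + F (single j j 1) k k = 0 := by
    linear_combination (hplus + hminus) / 2
  exact (add_eq_zero_iff_of_nonneg (hPos _ hii (posSemidef_single_self_one i)).diag_nonneg
    (hPos _ hjj (posSemidef_single_self_one j)).diag_nonneg).mp hD

end

theorem single_mem_tridiag {a b : Fin 4} (h : |(a : ℤ) - b| ≤ 1) (c : ℂ) :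
    single a b c ∈ tridiag := by
  intro k l hkl
  rw [single_apply, if_neg]
  rintro ⟨rfl, rfl⟩
  exact hkl.not_ge h

theorem apply_eq_of_sub_single_mem_tracelessDiag {A : Matrix (Fin 4) (Fin 4) ℂ} {p q : Fin 4}
    (hpq : p ≠ q) (h : A - single p q 1 ∈ tracelessDiag) :
    A p q = 1 ∧ A q p = 0 ∧ A.trace = 0 := by
  obtain ⟨hoff, htr⟩ := h
  have hpq' := hoff p q hpq
  have hqp := hoff q p hpq.symm
  simp only [Matrix.sub_apply, single_apply, sub_eq_zero] at hpq' hqp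
  refine ⟨by simpa using hpq', by simpa [hpq] using hqp, ?_⟩
  simpa [trace_sub, hpq, sub_eq_zero] using htr

/-- there is no positive, Hermitian-preserving linear map
`F : W → W` on the tridiagonal `4 × 4` matrices (preserving the traceless diagonal
subspace in the indicated way) that realizes the permutation `(1)(23)` of the matrix
units:  `F(|1⟩⟨2|) ≡ |1⟩⟨2|`, `F(|2⟩⟨3|) ≡ |3⟩⟨4|`, `F(|3⟩⟨4|) ≡ |2⟩⟨3|` modulo
traceless diagonals, with each `F(|j⟩⟨j|)` a nonnegative diagonal matrix of unit
trace. -/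
theorem no_positive_lifting_of_permutation :
    ¬ ∃ F : Matrix (Fin 4) (Fin 4) ℂ →ₗ[ℂ] Matrix (Fin 4) (Fin 4) ℂ,
      -- F maps W into W
      (∀ A ∈ tridiag, F A ∈ tridiag) ∧
      -- F is Hermitian-preserving on W
      (∀ A ∈ tridiag, F Aᴴ = (F A)ᴴ) ∧
      -- F is positive: it maps positive semidefinite elements of W to
      -- positive semidefinite elements of W
      (∀ A ∈ tridiag, A.PosSemidef → (F A).PosSemidef) ∧
      -- the action on the off-diagonal matrix units, modulo traceless diagonals
      F (Matrix.single 0 1 (1 : ℂ)) - Matrix.single 0 1 (1 : ℂ)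
        ∈ tracelessDiag ∧
      F (Matrix.single 1 2 (1 : ℂ)) - Matrix.single 2 3 (1 : ℂ)
        ∈ tracelessDiag ∧
      F (Matrix.single 2 3 (1 : ℂ)) - Matrix.single 1 2 (1 : ℂ)
        ∈ tracelessDiag ∧
      -- each F(|j⟩⟨j|) is a nonnegative diagonal matrix of unit trace
      (∀ j : Fin 4,
        (∀ k l : Fin 4, k ≠ l → F (Matrix.single j j (1 : ℂ)) k l = 0) ∧
        (∀ k : Fin 4, (F (Matrix.single j j (1 : ℂ)) k k).im = 0 ∧
          0 ≤ (F (Matrix.single j j (1 : ℂ)) k k).re) ∧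
        (F (Matrix.single j j (1 : ℂ))).trace = 1) := by
  rintro ⟨F, -, hH, hPos, h01, h12, -, hDiag⟩
  have hW {a b : Fin 4} (h : |(a : ℤ) - b| ≤ 1) : single a b (1 : ℂ) ∈ tridiag :=
    single_mem_tridiag h 1
  obtain ⟨b01, b10, btr⟩ := apply_eq_of_sub_single_mem_tracelessDiag (by decide) h01
  obtain ⟨c23, c32, ctr⟩ := apply_eq_of_sub_single_mem_tracelessDiag (by decide) h12
  have hlow (k : Fin 4) (hk0 : k ≠ 0) (hk1 : k ≠ 1) : F (single 1 1 1) k k = 0 :=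
    (apply_single_self_diag_eq_zero hH hPos (hW (by decide)) (hW (by decide)) (hW (by decide))
      (hW (by decide)) (by decide) hk0 hk1 b01 b10 btr (hDiag 0).1 (hDiag 1).1 (hDiag 0).2.2
      (hDiag 1).2.2).2
  have hhigh (k : Fin 4) (hk2 : k ≠ 2) (hk3 : k ≠ 3) : F (single 1 1 1) k k = 0 :=
    (apply_single_self_diag_eq_zero hH hPos (hW (by decide)) (hW (by decide)) (hW (by decide))
      (hW (by decide)) (by decide) hk2 hk3 c23 c32 ctr (hDiag 1).1 (hDiag 2).1 (hDiag 1).2.2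
      (hDiag 2).2.2).1
  have htr := (hDiag 1).2.2
  simp [trace, Fin.sum_univ_four, hhigh 0, hhigh 1, hlow 2, hlow 3] at htr
end
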